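/- arXiv:2501.12233 — 2 statements merged into one kernel-verified Lean document; each statement's English description precedes it below -/
import Mathlib

section
/- Let κ₁,…,κ₁₀, c₁, c₂ be positive reals and let (x₁,…,x₇) ∈ ℝ⁷ be a solution of the gene regulatory network steady-state system (the seven mass-action equations together with x₂ + x₅ = c₁ and x₁ + x₇ = c₂) with x₂ > 0. Then x₂ satisfies the cubic equation x₂³ − c₁x₂² + ((κ₁κ₄²κ₅κ₈κ₁₀c₂ + κ₃κ₄²κ₆κ₈κ₁₀)/(κ₂²κ₃κ₆κ₇κ₉))·x₂ − (κ₄²κ₈κ₁₀c₁)/(κ₂²κ₇κ₉) = 0. -/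
/-!
Eliminate the variables one at a time. Adding `e4` to twice `e6 + e7` gives `κ₄ x₄ = κ₂ x₂`, and
`e6 + e7` gives `κ₈ x₆ = κ₇ x₄²`, so `x₆` is a multiple of `x₂²`. Adding `e3` and `e5` gives
`κ₁ x₁ = κ₃ x₃`, which with `e5` and `x₅ = c₁ - x₂` yields `κ₁ κ₅ x₂ x₁ = κ₃ κ₆ (c₁ - x₂)`, while `e7`
and `x₇ = c₂ - x₁` yield `x₁ (κ₉ x₆ + κ₁₀) = κ₁₀ c₂`. Eliminating `x₁` between the last two relations
and substituting `x₆` leaves the cubic multiplied by `κ₂² κ₃ κ₆ κ₇ κ₉`.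
-/

namespace GeneNetworkSteadyState

variable {R : Type*} [CommRing R]
  {κ₁ κ₂ κ₃ κ₄ κ₅ κ₆ κ₇ κ₈ κ₉ κ₁₀ c₁ c₂ x₁ x₂ x₃ x₄ x₅ x₆ x₇ : R}

theorem kappa₈_mul_x₆_eq (e6 : κ₇ * x₄ ^ 2 - κ₈ * x₆ + κ₁₀ * x₇ - κ₉ * x₁ * x₆ = 0)
    (e7 : κ₉ * x₁ * x₆ - κ₁₀ * x₇ = 0) :
    κ₈ * x₆ = κ₇ * x₄ ^ 2 := by
  linear_combination -e6 - e7

theorem kappa₄_mul_x₄_eq (e4 : -2 * κ₇ * x₄ ^ 2 - κ₄ * x₄ + κ₂ * x₂ + 2 * κ₈ * x₆ = 0)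
    (e6 : κ₇ * x₄ ^ 2 - κ₈ * x₆ + κ₁₀ * x₇ - κ₉ * x₁ * x₆ = 0)
    (e7 : κ₉ * x₁ * x₆ - κ₁₀ * x₇ = 0) :
    κ₄ * x₄ = κ₂ * x₂ := by
  linear_combination -e4 - 2 * e6 - 2 * e7

theorem x₆_eq_sq_x₂ (e4 : -2 * κ₇ * x₄ ^ 2 - κ₄ * x₄ + κ₂ * x₂ + 2 * κ₈ * x₆ = 0)
    (e6 : κ₇ * x₄ ^ 2 - κ₈ * x₆ + κ₁₀ * x₇ - κ₉ * x₁ * x₆ = 0)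
    (e7 : κ₉ * x₁ * x₆ - κ₁₀ * x₇ = 0) :
    κ₄ ^ 2 * κ₈ * x₆ = κ₂ ^ 2 * κ₇ * x₂ ^ 2 := by
  have h₄ := kappa₄_mul_x₄_eq e4 e6 e7
  linear_combination κ₄ ^ 2 * kappa₈_mul_x₆_eq e6 e7 + κ₇ * (κ₄ * x₄ + κ₂ * x₂) * h₄

theorem x₁_mul_x₂_eq (e3 : κ₁ * x₁ - κ₃ * x₃ + κ₆ * x₅ - κ₅ * x₂ * x₃ = 0)
    (e5 : κ₅ * x₂ * x₃ - κ₆ * x₅ = 0) (c1 : x₂ + x₅ = c₁) :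
    κ₁ * κ₅ * x₂ * x₁ = κ₃ * κ₆ * (c₁ - x₂) := by
  have h₃ : κ₁ * x₁ = κ₃ * x₃ := by linear_combination e3 + e5
  linear_combination κ₅ * x₂ * h₃ + κ₃ * e5 + κ₃ * κ₆ * c1

theorem x₁_mul_eq_kappa₁₀_mul_c₂ (e7 : κ₉ * x₁ * x₆ - κ₁₀ * x₇ = 0) (c2 : x₁ + x₇ = c₂) :
    x₁ * (κ₉ * x₆ + κ₁₀) = κ₁₀ * c₂ := by
  linear_combination e7 + κ₁₀ * c2

theorem cleared_cubic_eq_zero (e3 : κ₁ * x₁ - κ₃ * x₃ + κ₆ * x₅ - κ₅ * x₂ * x₃ = 0)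
    (e4 : -2 * κ₇ * x₄ ^ 2 - κ₄ * x₄ + κ₂ * x₂ + 2 * κ₈ * x₆ = 0)
    (e5 : κ₅ * x₂ * x₃ - κ₆ * x₅ = 0)
    (e6 : κ₇ * x₄ ^ 2 - κ₈ * x₆ + κ₁₀ * x₇ - κ₉ * x₁ * x₆ = 0)
    (e7 : κ₉ * x₁ * x₆ - κ₁₀ * x₇ = 0) (c1 : x₂ + x₅ = c₁) (c2 : x₁ + x₇ = c₂) :
    κ₂ ^ 2 * κ₃ * κ₆ * κ₇ * κ₉ * (x₂ ^ 3 - c₁ * x₂ ^ 2)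
      + (κ₁ * κ₄ ^ 2 * κ₅ * κ₈ * κ₁₀ * c₂ + κ₃ * κ₄ ^ 2 * κ₆ * κ₈ * κ₁₀) * x₂
      - κ₃ * κ₄ ^ 2 * κ₆ * κ₈ * κ₁₀ * c₁ = 0 := by
  have elim_x₁ : κ₁ * κ₅ * κ₁₀ * c₂ * x₂ = κ₃ * κ₆ * (c₁ - x₂) * (κ₉ * x₆ + κ₁₀) := by
    linear_combination (κ₉ * x₆ + κ₁₀) * x₁_mul_x₂_eq e3 e5 c1
      - κ₁ * κ₅ * x₂ * x₁_mul_eq_kappa₁₀_mul_c₂ e7 c2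
  linear_combination κ₄ ^ 2 * κ₈ * elim_x₁ + κ₃ * κ₆ * κ₉ * (c₁ - x₂) * x₆_eq_sq_x₂ e4 e6 e7

end GeneNetworkSteadyState

open GeneNetworkSteadyState in
theorem stmt18_general (κ₁ κ₂ κ₃ κ₄ κ₅ κ₆ κ₇ κ₈ κ₉ κ₁₀ c₁ c₂ : ℝ)
    (hκ₂ : 0 < κ₂) (hκ₃ : 0 < κ₃)
    (hκ₆ : 0 < κ₆) (hκ₇ : 0 < κ₇) (hκ₉ : 0 < κ₉)
    (x₁ x₂ x₃ x₄ x₅ x₆ x₇ : ℝ)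
    (e3 : κ₁ * x₁ - κ₃ * x₃ + κ₆ * x₅ - κ₅ * x₂ * x₃ = 0)
    (e4 : -2 * κ₇ * x₄ ^ 2 - κ₄ * x₄ + κ₂ * x₂ + 2 * κ₈ * x₆ = 0)
    (e5 : κ₅ * x₂ * x₃ - κ₆ * x₅ = 0)
    (e6 : κ₇ * x₄ ^ 2 - κ₈ * x₆ + κ₁₀ * x₇ - κ₉ * x₁ * x₆ = 0)
    (e7 : κ₉ * x₁ * x₆ - κ₁₀ * x₇ = 0)
    (c1 : x₂ + x₅ = c₁)
    (c2 : x₁ + x₇ = c₂) :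
    x₂ ^ 3 - c₁ * x₂ ^ 2 +
      ((κ₁ * κ₄ ^ 2 * κ₅ * κ₈ * κ₁₀ * c₂ + κ₃ * κ₄ ^ 2 * κ₆ * κ₈ * κ₁₀) /
        (κ₂ ^ 2 * κ₃ * κ₆ * κ₇ * κ₉)) * x₂ -
      (κ₄ ^ 2 * κ₈ * κ₁₀ * c₁) / (κ₂ ^ 2 * κ₇ * κ₉) = 0 := by
  have hD : κ₂ ^ 2 * κ₃ * κ₆ * κ₇ * κ₉ ≠ 0 := by positivity
  have hD' : κ₂ ^ 2 * κ₇ * κ₉ ≠ 0 := by positivity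
  field_simp
  linear_combination cleared_cubic_eq_zero e3 e4 e5 e6 e7 c1 c2

theorem stmt18 (κ₁ κ₂ κ₃ κ₄ κ₅ κ₆ κ₇ κ₈ κ₉ κ₁₀ c₁ c₂ : ℝ)
    (hκ₁ : 0 < κ₁) (hκ₂ : 0 < κ₂) (hκ₃ : 0 < κ₃) (hκ₄ : 0 < κ₄) (hκ₅ : 0 < κ₅)
    (hκ₆ : 0 < κ₆) (hκ₇ : 0 < κ₇) (hκ₈ : 0 < κ₈) (hκ₉ : 0 < κ₉) (hκ₁₀ : 0 < κ₁₀)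
    (hc₁ : 0 < c₁) (hc₂ : 0 < c₂)
    (x₁ x₂ x₃ x₄ x₅ x₆ x₇ : ℝ)
    (e1 : κ₁₀ * x₇ - κ₉ * x₁ * x₆ = 0)
    (e2 : κ₆ * x₅ - κ₅ * x₂ * x₃ = 0)
    (e3 : κ₁ * x₁ - κ₃ * x₃ + κ₆ * x₅ - κ₅ * x₂ * x₃ = 0)
    (e4 : -2 * κ₇ * x₄ ^ 2 - κ₄ * x₄ + κ₂ * x₂ + 2 * κ₈ * x₆ = 0)
    (e5 : κ₅ * x₂ * x₃ - κ₆ * x₅ = 0)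
    (e6 : κ₇ * x₄ ^ 2 - κ₈ * x₆ + κ₁₀ * x₇ - κ₉ * x₁ * x₆ = 0)
    (e7 : κ₉ * x₁ * x₆ - κ₁₀ * x₇ = 0)
    (c1 : x₂ + x₅ = c₁)
    (c2 : x₁ + x₇ = c₂) (hx₂ : 0 < x₂) :
    x₂ ^ 3 - c₁ * x₂ ^ 2 +
      ((κ₁ * κ₄ ^ 2 * κ₅ * κ₈ * κ₁₀ * c₂ + κ₃ * κ₄ ^ 2 * κ₆ * κ₈ * κ₁₀) /
        (κ₂ ^ 2 * κ₃ * κ₆ * κ₇ * κ₉)) * x₂ -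
      (κ₄ ^ 2 * κ₈ * κ₁₀ * c₁) / (κ₂ ^ 2 * κ₇ * κ₉) = 0 :=
  stmt18_general κ₁ κ₂ κ₃ κ₄ κ₅ κ₆ κ₇ κ₈ κ₉ κ₁₀ c₁ c₂ hκ₂ hκ₃ hκ₆ hκ₇ hκ₉ x₁ x₂ x₃ x₄ x₅ x₆ x₇ e3 e4
    e5 e6 e7 c1 c2
end

section
/- Let K be an algebraically closed field and I ⊆ K[x₁,…,xₙ] an ideal whose generating set has the triangular shape xₙ − gₙ(x₁), …, x₂ − g₂(x₁), g₁(x₁) with g₁ a nonzero squarefree polynomial of degree d. Then the zero set of I in Kⁿ has exactly d points, and the map sending a zero p to its first coordinate p₁ is injective (i.e., I is in normal form). -/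
/-!
A zero `p` of the ideal is pinned down by `t = p₁`: the generators `xⱼ - gⱼ(x₁)` force
`p = (t, g₂(t), …, gₙ(t))`, and `g₁(x₁)` forces `g₁(t) = 0`. So the zero set is the image of the
roots of `g₁` under the map `t ↦ (t, g₂(t), …, gₙ(t))`, which `p ↦ p₁` inverts, and a squarefree
polynomial over an algebraically closed field has exactly `deg g₁` distinct roots.
-/

open Polynomial

@[simp]
theorem MvPolynomial.eval_polynomial_aeval_X {R σ : Type*} [CommSemiring R] (x : σ → R) (i : σ)
    (q : R[X]) : MvPolynomial.eval x (Polynomial.aeval (MvPolynomial.X i) q) = q.eval (x i) := by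
  have hC : (MvPolynomial.eval x).comp MvPolynomial.C = RingHom.id R := by ext; simp
  rw [Polynomial.aeval_def, Polynomial.hom_eval₂, MvPolynomial.algebraMap_eq, hC,
    MvPolynomial.eval_X, Polynomial.eval₂_id]

theorem Polynomial.ncard_setOf_isRoot_eq_natDegree {K : Type*} [Field K] [IsAlgClosed K]
    {p : K[X]} (hp : Squarefree p) : {t | p.IsRoot t}.ncard = p.natDegree := by
  classical
  have hp0 : p ≠ 0 := by rintro rfl; exact not_squarefree_zero hp
  have hroots : {t | p.IsRoot t} = ↑p.roots.toFinset := by ext; simp [hp0]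
  rw [hroots, Set.ncard_coe_finset,
    Multiset.toFinset_card_of_nodup (nodup_roots (PerfectField.separable_iff_squarefree.mpr hp)),
    ← splits_iff_card_roots.mp (IsAlgClosed.splits p)]

noncomputable section Triangular

variable {K σ : Type*} [Field K] (i₀ : σ) (g₀ : K[X]) (g : σ → K[X])

def triangularIdeal : Ideal (MvPolynomial σ K) :=
  Ideal.span ({Polynomial.aeval (MvPolynomial.X i₀) g₀} ∪
    {f | ∃ j, j ≠ i₀ ∧ f = MvPolynomial.X j - Polynomial.aeval (MvPolynomial.X i₀) (g j)})

theorem mem_zeroLocus_triangularIdeal {x : σ → K} :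
    x ∈ MvPolynomial.zeroLocus K (triangularIdeal i₀ g₀ g) ↔
      g₀.IsRoot (x i₀) ∧ ∀ j ≠ i₀, x j = (g j).eval (x i₀) := by
  simp [triangularIdeal, MvPolynomial.zeroLocus_span, or_imp, forall_and, sub_eq_zero,
    forall_comm (α := MvPolynomial σ K)]

variable [DecidableEq σ]

def triangularSection (t : K) : σ → K :=
  Function.update (fun j => (g j).eval t) i₀ t

theorem triangularSection_apply_self (t : K) : triangularSection i₀ g t i₀ = t :=
  Function.update_self ..

theorem triangularSection_injective : Function.Injective (triangularSection i₀ g) :=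
  Function.LeftInverse.injective (g := fun x : σ → K => x i₀) (triangularSection_apply_self i₀ g)

theorem zeroLocus_triangularIdeal :
    MvPolynomial.zeroLocus K (triangularIdeal i₀ g₀ g) =
      triangularSection i₀ g '' {t | g₀.IsRoot t} := by
  ext x
  simp only [mem_zeroLocus_triangularIdeal, Set.mem_image, Set.mem_ofPred_eq, triangularSection,
    eq_comm (b := x), Function.eq_update_iff]
  exact ⟨fun ⟨hroot, hx⟩ => ⟨x i₀, hroot, rfl, hx⟩, fun ⟨_, hroot, rfl, hx⟩ => ⟨hroot, hx⟩⟩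

end Triangular

theorem stmt19 (K : Type*) [Field K] [IsAlgClosed K]
    (n : ℕ) (hn : 2 ≤ n) (d : ℕ)
    (g : Fin n → Polynomial K)
    (hsf : Squarefree (g ⟨0, by omega⟩))
    (hd : (g ⟨0, by omega⟩).natDegree = d)
    (I : Ideal (MvPolynomial (Fin n) K))
    (hI : I = Ideal.span
      ({Polynomial.aeval (MvPolynomial.X (⟨0, by omega⟩ : Fin n)) (g ⟨0, by omega⟩)} ∪
        {f | ∃ j : Fin n, j ≠ ⟨0, by omega⟩ ∧
          f = MvPolynomial.X j -
            Polynomial.aeval (MvPolynomial.X (⟨0, by omega⟩ : Fin n)) (g j)})) :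
    {p : Fin n → K | ∀ f ∈ I, MvPolynomial.aeval p f = 0}.ncard = d ∧
    Set.InjOn (fun p : Fin n → K => p ⟨0, by omega⟩)
      {p : Fin n → K | ∀ f ∈ I, MvPolynomial.aeval p f = 0} := by
  set i₀ : Fin n := ⟨0, by omega⟩
  have hZ : {p : Fin n → K | ∀ f ∈ I, MvPolynomial.aeval p f = 0} =
      triangularSection i₀ g '' {t | (g i₀).IsRoot t} :=
    hI ▸ zeroLocus_triangularIdeal i₀ (g i₀) g
  rw [hZ]
  refine ⟨?_, ?_⟩
  · rw [Set.ncard_image_of_injective _ (triangularSection_injective i₀ g),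
      ncard_setOf_isRoot_eq_natDegree hsf, hd]
  · rintro _ ⟨s, -, rfl⟩ _ ⟨t, -, rfl⟩ hst
    simp only [triangularSection_apply_self] at hst
    rw [hst]
end
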